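/- Let G be a finite group, H a normal subgroup of G of index 2, and b ∈ G \ H. Let M be the set of class functions on H of the form χ − ᵇχ, where χ ranges over all ℤ-linear combinations of characters of finite-dimensional complex representations of H (i.e. over all virtual characters of H). Then M is a free abelian group, and a ℤ-basis of M is given by the functions χ − ᵇχ, where χ ranges over a set of representatives of the two-element G-orbits in the set of irreducible characters of H (one representative chosen from each orbit {χ, ᵇχ} with ᵇχ ≠ χ). -/

import Mathlib

open CategoryTheory

/-- The conjugate `ᵍχ` of a function `χ : H → ℂ` on a normal subgroup `H` of `G`
by an element `g ∈ G`, defined by `ᵍχ(h) = χ(g⁻¹ h g)`. -/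
def conjFun {G : Type*} [Group G] (H : Subgroup G) [hN : H.Normal] (g : G)
    (χ : ↥H → ℂ) : ↥H → ℂ :=
  fun h => χ ⟨g⁻¹ * ↑h * g, hN.conj_mem' ↑h h.2 g⟩

/-- The set of virtual characters of `H`: all `ℤ`-linear combinations of characters of
finite-dimensional complex representations of `H`. -/
noncomputable def virtualCharacters (H : Type) [Group H] : Submodule ℤ (H → ℂ) :=
  Submodule.span ℤ {f : H → ℂ | ∃ V : FDRep ℂ H, f = V.character}

/-- `χ : H → ℂ` is the character of a finite-dimensional irreducible complex
representation of `H`. -/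
def IsIrreducibleCharacter (H : Type) [Group H] (χ : H → ℂ) : Prop :=
  ∃ V : FDRep ℂ H, Simple V ∧ χ = V.character

/-! Write `D χ = χ - ᵇχ` (`subConjFun`). By Maschke's theorem every character is a sum of
irreducible ones, so `M` is spanned by the `D ψ` with `ψ` irreducible. Here `D ψ = 0` if `ᵇψ = ψ`,
and otherwise `D (ᵇψ) = -D ψ` because `b² ∈ H` fixes every character; hence the `D χ`, `χ ∈ T`,
span `M`. They are independent since, by the orthogonality relations, `⟨D χ, D ψ⟩` is `2|H|` for
`χ = ψ` and `0` otherwise. -/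

section Orthogonality

variable {R M N ι : Type*} [CommRing R] [IsDomain R] [AddCommGroup M] [Module R M]
  [AddCommGroup N] [Module R N] [Module.IsTorsionFree R N]

theorem linearIndependent_of_pairing_orthogonal (B : M →ₗ[R] M →ₗ[R] N) {v : ι → M}
    (horth : ∀ i j, i ≠ j → B (v i) (v j) = 0) (hself : ∀ i, B (v i) (v i) ≠ 0) :
    LinearIndependent R v := by
  classical
  rw [linearIndependent_iff']
  intro s c hs i hi
  have h := congrArg (B (v i)) hs
  rw [map_zero, map_sum, Finset.sum_eq_single_of_mem i hi
    (fun j _ hji => by rw [map_smul, horth i j hji.symm, smul_zero]), map_smul] at h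
  exact (smul_eq_zero.mp h).resolve_right (hself i)

end Orthogonality

theorem Subrepresentation.isCompl_toSubmodule {A G W : Type*} [Semiring A] [Monoid G]
    [AddCommMonoid W] [Module A W] {ρ : Representation A G W} {p q : Subrepresentation ρ}
    (h : IsCompl p q) : IsCompl p.toSubmodule q.toSubmodule := by
  rw [isCompl_iff, disjoint_iff, codisjoint_iff] at h ⊢
  exact ⟨congrArg Subrepresentation.toSubmodule h.1, congrArg Subrepresentation.toSubmodule h.2⟩

theorem Representation.character_eq_add_of_isCompl {k G V : Type*} [Field k] [Monoid G]
    [AddCommGroup V] [Module k V] [FiniteDimensional k V] {ρ : Representation k G V}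
    {p q : Subrepresentation ρ} (h : IsCompl p q) :
    ρ.character = p.toRepresentation.character + q.toRepresentation.character := by
  have hint : DirectSum.IsInternal (fun i : Bool => cond i p.toSubmodule q.toSubmodule) :=
    (DirectSum.isInternal_submodule_iff_isCompl _ (i := true) (j := false)
      (by simp) (by ext i; cases i <;> simp)).mpr (Subrepresentation.isCompl_toSubmodule h)
  funext g
  have hmaps : ∀ i : Bool, Set.MapsTo (ρ g) ↑(cond i p.toSubmodule q.toSubmodule)
      ↑(cond i p.toSubmodule q.toSubmodule) := by
    intro i
    cases i
    · exact fun x hx => q.apply_mem_toSubmodule g hx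
    · exact fun x hx => p.apply_mem_toSubmodule g hx
  have := LinearMap.trace_eq_sum_trace_restrict hint hmaps
  rwa [Fintype.sum_bool] at this

section IrreducibleCharacters

variable {K : Type} [Group K] [Fintype K]

theorem isIrreducibleCharacter_iff {χ : K → ℂ} :
    IsIrreducibleCharacter K χ ↔
      (∃ V : FDRep ℂ K, χ = V.character) ∧ ∑ g, χ g * χ g⁻¹ = Nat.card K := by
  constructor
  · rintro ⟨V, hV, rfl⟩
    exact ⟨⟨V, rfl⟩, (FDRep.simple_iff_char_is_norm_one V).mp hV⟩
  · rintro ⟨⟨V, rfl⟩, h⟩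
    exact ⟨V, (FDRep.simple_iff_char_is_norm_one V).mpr h, rfl⟩

theorem Representation.IsIrreducible.isIrreducibleCharacter {V : Type} [AddCommGroup V]
    [Module ℂ V] [FiniteDimensional ℂ V] (ρ : Representation ℂ K V) [ρ.IsIrreducible] :
    IsIrreducibleCharacter K ρ.character := by
  have : Invertible (Nat.card K : ℂ) := invertibleOfNonzero (NeZero.ne _)
  refine isIrreducibleCharacter_iff.mpr ⟨⟨FDRep.of ρ, rfl⟩, ?_⟩
  have h := Representation.char_orthonormal ρ ρ
  rw [if_pos ⟨Representation.Equiv.refl ρ⟩, inv_mul_eq_one₀ (NeZero.ne _)] at h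
  exact_mod_cast h.symm

theorem IsIrreducibleCharacter.comp_mulEquiv {χ : K → ℂ} (hχ : IsIrreducibleCharacter K χ)
    (σ : K ≃* K) : IsIrreducibleCharacter K (χ ∘ σ) := by
  obtain ⟨⟨V, rfl⟩, hnorm⟩ := isIrreducibleCharacter_iff.mp hχ
  refine isIrreducibleCharacter_iff.mpr ⟨⟨FDRep.of (V.ρ.comp σ.toMonoidHom), rfl⟩, ?_⟩
  simpa [map_inv] using
    (Equiv.sum_comp σ.toEquiv (fun g => V.character g * V.character g⁻¹)).trans hnorm

theorem Representation.character_mem_span_irreducible {V : Type} [AddCommGroup V] [Module ℂ V]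
    [FiniteDimensional ℂ V] (ρ : Representation ℂ K V) :
    ρ.character ∈ Submodule.span ℤ {χ | IsIrreducibleCharacter K χ} := by
  induction hn : Module.finrank ℂ V using Nat.strong_induction_on generalizing V with
  | _ n ih =>
  rcases subsingleton_or_nontrivial V with hV | hV
  · have : ρ.character = 0 := funext fun g => by
      simp [Representation.character, Subsingleton.elim (ρ g) 0]
    exact this ▸ zero_mem _
  by_cases hirr : ρ.IsIrreducible
  · exact Submodule.subset_span hirr.isIrreducibleCharacter
  obtain ⟨p, hp⟩ : ∃ p : Subrepresentation ρ, p ≠ ⊥ ∧ p ≠ ⊤ := by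
    by_contra! h
    exact hirr
      { exists_pair_ne := ⟨⊥, ⊤, fun h => bot_ne_top (congrArg Subrepresentation.toSubmodule h)⟩
        eq_bot_or_eq_top := fun p => or_iff_not_imp_left.mpr (h p) }
  obtain ⟨q, hpq⟩ := exists_isCompl p
  have hq : q ≠ ⊤ := fun h => hp.1 (eq_bot_of_isCompl_top (h ▸ hpq))
  have hlt : ∀ r : Subrepresentation ρ, r ≠ ⊤ → Module.finrank ℂ r.toSubmodule < n := fun r hr =>
    hn ▸ Submodule.finrank_lt (fun h => hr (Subrepresentation.toSubmodule_injective h))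
  rw [Representation.character_eq_add_of_isCompl hpq]
  exact add_mem (ih _ (hlt p hp.2) _ rfl) (ih _ (hlt q hq) _ rfl)

theorem virtualCharacters_eq_span_irreducible :
    virtualCharacters K = Submodule.span ℤ {χ | IsIrreducibleCharacter K χ} :=
  le_antisymm
    (Submodule.span_le.mpr fun _ ⟨V, hV⟩ => hV ▸ Representation.character_mem_span_irreducible V.ρ)
    (Submodule.span_mono fun _ ⟨V, _, hV⟩ => ⟨V, hV⟩)

/-- The inner product of class functions up to the factor `|K|`, written with `g h⁻¹` in place of
`conj (g h)` (they agree on characters) so that it is `ℤ`-bilinear. -/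
def charPairing (K : Type) [Group K] [Fintype K] : (K → ℂ) →ₗ[ℤ] (K → ℂ) →ₗ[ℤ] ℂ :=
  LinearMap.mk₂ ℤ (fun f g => ∑ h, f h * g h⁻¹)
    (fun _ _ _ => by simp [add_mul, Finset.sum_add_distrib])
    (fun _ _ _ => by simp [Finset.mul_sum, mul_assoc])
    (fun _ _ _ => by simp [mul_add, Finset.sum_add_distrib])
    (fun _ _ _ => by simp [Finset.mul_sum, mul_left_comm])

theorem charPairing_of_isIrreducibleCharacter {χ ψ : K → ℂ} (hχ : IsIrreducibleCharacter K χ)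
    (hψ : IsIrreducibleCharacter K ψ) :
    charPairing K χ ψ = if χ = ψ then (Nat.card K : ℂ) else 0 := by
  split_ifs with h
  · exact h ▸ (isIrreducibleCharacter_iff.mp hχ).2
  obtain ⟨V, hV, rfl⟩ := hχ
  obtain ⟨W, hW, rfl⟩ := hψ
  have : Invertible (Nat.card K : ℂ) := invertibleOfNonzero (NeZero.ne _)
  have horth := FDRep.char_orthonormal V W
  rw [if_neg fun ⟨i⟩ => h (FDRep.char_iso i)] at horth
  exact (mul_eq_zero.mp horth).resolve_left (inv_ne_zero (NeZero.ne _))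

end IrreducibleCharacters

section Conjugation

variable {G : Type} [Group G] (H : Subgroup G) [H.Normal] (b : G)

theorem conjFun_eq_comp (χ : H → ℂ) :
    conjFun H b χ = χ ∘ (MulAut.conjNormal b⁻¹ : MulAut H) :=
  funext fun h => congrArg χ (Subtype.ext (by simp))

theorem conjFun_injective : Function.Injective (conjFun H b) := by
  intro χ ψ h
  rw [conjFun_eq_comp, conjFun_eq_comp] at h
  exact (MulEquiv.toEquiv _).surjective.injective_comp_right h

def subConjFun : (H → ℂ) →ₗ[ℤ] (H → ℂ) where
  toFun χ := χ - conjFun H b χ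
  map_add' χ ψ := by
    funext h
    simp only [conjFun, Pi.add_apply, Pi.sub_apply]
    ring
  map_smul' n χ := by
    funext h
    simp only [conjFun, Pi.smul_apply, Pi.sub_apply, smul_sub, eq_intCast, Int.cast_id]

theorem subConjFun_apply (χ : H → ℂ) : subConjFun H b χ = χ - conjFun H b χ := rfl

variable {H} in
theorem IsIrreducibleCharacter.conjFun [Fintype H] {χ : H → ℂ}
    (hχ : IsIrreducibleCharacter H χ) : IsIrreducibleCharacter H (conjFun H b χ) :=
  conjFun_eq_comp H b χ ▸ hχ.comp_mulEquiv _

theorem conjFun_conjFun_character (hidx : H.index = 2) (V : FDRep ℂ H) :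
    conjFun H b (conjFun H b V.character) = V.character := by
  funext h
  let d : H := ⟨b * b, Subgroup.mul_self_mem_of_index_two hidx b⟩
  refine (congrArg V.character (Subtype.ext ?_)).trans (FDRep.char_conj V h d⁻¹)
  simp [d, mul_assoc]

end Conjugation

section SubConjFun

variable {G : Type} [Group G] {H : Subgroup G} [H.Normal] {b : G}

theorem charPairing_subConjFun [Fintype H] {χ ψ : H → ℂ} (hχ : IsIrreducibleCharacter H χ)
    (hψ : IsIrreducibleCharacter H ψ) :
    charPairing H (subConjFun H b χ) (subConjFun H b ψ) =
      (if χ = ψ then (Nat.card H : ℂ) else 0) - (if χ = conjFun H b ψ then (Nat.card H : ℂ) else 0)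
        - (if conjFun H b χ = ψ then (Nat.card H : ℂ) else 0)
        + (if χ = ψ then (Nat.card H : ℂ) else 0) := by
  simp only [subConjFun_apply, map_sub, LinearMap.sub_apply]
  rw [charPairing_of_isIrreducibleCharacter hχ hψ,
    charPairing_of_isIrreducibleCharacter hχ (hψ.conjFun b),
    charPairing_of_isIrreducibleCharacter (hχ.conjFun b) hψ,
    charPairing_of_isIrreducibleCharacter (hχ.conjFun b) (hψ.conjFun b)]
  simp only [(conjFun_injective H b).eq_iff]
  ring

theorem charPairing_subConjFun_self [Fintype H] {χ : H → ℂ} (hχ : IsIrreducibleCharacter H χ)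
    (hmoved : conjFun H b χ ≠ χ) :
    charPairing H (subConjFun H b χ) (subConjFun H b χ) = 2 * Nat.card H := by
  rw [charPairing_subConjFun hχ hχ, if_pos rfl, if_neg hmoved.symm, if_neg hmoved]
  ring

theorem charPairing_subConjFun_eq_zero [Fintype H] {χ ψ : H → ℂ}
    (hχ : IsIrreducibleCharacter H χ) (hψ : IsIrreducibleCharacter H ψ) (hne : χ ≠ ψ)
    (hne₁ : χ ≠ conjFun H b ψ) (hne₂ : conjFun H b χ ≠ ψ) :
    charPairing H (subConjFun H b χ) (subConjFun H b ψ) = 0 := by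
  rw [charPairing_subConjFun hχ hψ, if_neg hne, if_neg hne₁, if_neg hne₂]
  ring

theorem span_subConjFun_irreducible_eq (hidx : H.index = 2) {T : Set (H → ℂ)}
    (hTirr : ∀ χ ∈ T, IsIrreducibleCharacter H χ)
    (hTcomplete : ∀ ψ : H → ℂ, IsIrreducibleCharacter H ψ → conjFun H b ψ ≠ ψ →
      ψ ∈ T ∨ conjFun H b ψ ∈ T) :
    Submodule.span ℤ (subConjFun H b '' {χ | IsIrreducibleCharacter H χ}) =
      Submodule.span ℤ (subConjFun H b '' T) := by
  refine le_antisymm (Submodule.span_le.mpr ?_) (Submodule.span_mono (Set.image_mono hTirr))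
  rintro _ ⟨ψ, hψ, rfl⟩
  by_cases hfix : conjFun H b ψ = ψ
  · rw [subConjFun_apply, hfix, sub_self]
    exact zero_mem _
  rcases hTcomplete ψ hψ hfix with hT | hT
  · exact Submodule.subset_span ⟨ψ, hT, rfl⟩
  · obtain ⟨V, -, rfl⟩ := hψ
    have : subConjFun H b V.character = -subConjFun H b (conjFun H b V.character) := by
      rw [subConjFun_apply, subConjFun_apply, conjFun_conjFun_character H b hidx, neg_sub]
    exact this ▸ neg_mem (Submodule.subset_span ⟨_, hT, rfl⟩)

end SubConjFun

theorem virtual_character_sub_conj_free_basis_general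
    {G : Type} [Group G] [Finite G] (H : Subgroup G) [H.Normal] (hidx : H.index = 2)
    (b : G)
    (T : Set (↥H → ℂ))
    (hTirr : ∀ χ ∈ T, IsIrreducibleCharacter ↥H χ)
    (hTmoved : ∀ χ ∈ T, conjFun H b χ ≠ χ)
    (hTorbits : ∀ χ ∈ T, ∀ χ' ∈ T, χ ≠ χ' → χ' ≠ conjFun H b χ)
    (hTcomplete : ∀ ψ : ↥H → ℂ, IsIrreducibleCharacter ↥H ψ → conjFun H b ψ ≠ ψ →
      ψ ∈ T ∨ conjFun H b ψ ∈ T) :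
    LinearIndependent ℤ (fun χ : T => (χ : ↥H → ℂ) - conjFun H b χ) ∧
    {f : ↥H → ℂ | ∃ χ ∈ virtualCharacters ↥H, f = χ - conjFun H b χ} =
      ↑(Submodule.span ℤ {f : ↥H → ℂ | ∃ χ ∈ T, f = χ - conjFun H b χ}) := by
  have : Fintype H := Fintype.ofFinite H
  refine ⟨linearIndependent_of_pairing_orthogonal (charPairing H)
    (v := fun χ : T => subConjFun H b χ)
    (fun χ ψ hne => charPairing_subConjFun_eq_zero (hTirr χ χ.2) (hTirr ψ ψ.2)
      (Subtype.coe_ne_coe.mpr hne) (hTorbits ψ ψ.2 χ χ.2 (Subtype.coe_ne_coe.mpr hne.symm))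
      (hTorbits χ χ.2 ψ ψ.2 (Subtype.coe_ne_coe.mpr hne)).symm)
    (fun χ => by
      rw [charPairing_subConjFun_self (hTirr χ χ.2) (hTmoved χ χ.2)]
      exact mul_ne_zero two_ne_zero (NeZero.ne _)), ?_⟩
  have himage : ∀ S : Set (H → ℂ),
      {f | ∃ χ ∈ S, f = χ - conjFun H b χ} = subConjFun H b '' S := fun S => by
    ext f
    simp [subConjFun_apply, eq_comm]
  rw [himage, ← span_subConjFun_irreducible_eq hidx hTirr hTcomplete, ← Submodule.map_span,
    ← virtualCharacters_eq_span_irreducible, Submodule.map_coe]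
  exact himage _

/-- Let `G` be a finite group, `H` a normal subgroup of index 2, and
`b ∈ G \ H`.  Let `M` be the set of class functions on `H` of the form `χ − ᵇχ`, where
`χ` ranges over all virtual characters of `H`.  Then `M` is a free abelian group with
`ℤ`-basis the functions `χ − ᵇχ`, where `χ` ranges over a set `T` of representatives of
the two-element `G`-orbits in the set of irreducible characters of `H`: the family
`(χ − ᵇχ)_{χ ∈ T}` is `ℤ`-linearly independent and `M` is its `ℤ`-span. -/
theorem virtual_character_sub_conj_free_basis
    {G : Type} [Group G] [Finite G] (H : Subgroup G) [H.Normal] (hidx : H.index = 2)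
    (b : G) (hb : b ∉ H)
    (T : Set (↥H → ℂ))
    (hTirr : ∀ χ ∈ T, IsIrreducibleCharacter ↥H χ)
    (hTmoved : ∀ χ ∈ T, conjFun H b χ ≠ χ)
    (hTorbits : ∀ χ ∈ T, ∀ χ' ∈ T, χ ≠ χ' → χ' ≠ conjFun H b χ)
    (hTcomplete : ∀ ψ : ↥H → ℂ, IsIrreducibleCharacter ↥H ψ → conjFun H b ψ ≠ ψ →
      ψ ∈ T ∨ conjFun H b ψ ∈ T) :
    LinearIndependent ℤ (fun χ : T => (χ : ↥H → ℂ) - conjFun H b χ) ∧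
    {f : ↥H → ℂ | ∃ χ ∈ virtualCharacters ↥H, f = χ - conjFun H b χ} =
      ↑(Submodule.span ℤ {f : ↥H → ℂ | ∃ χ ∈ T, f = χ - conjFun H b χ}) :=
  virtual_character_sub_conj_free_basis_general H hidx b T hTirr hTmoved hTorbits hTcomplete
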